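/- With the stiffness matrix entries z_{i,j} defined via the weighted left and right fractional integrals of the hat-function derivatives, the strictly lower-triangular entries satisfy, for every 3 ≤ i ≤ I−1 and 1 ≤ j ≤ i−2, z_{i,j} = ( b·γ·h^{λ−1} / Γ(λ+1) ) · [ ( (i−j+1/2)^λ − 2·(i−j−1/2)^λ + (i−j−3/2)^λ ) − ( (i−j+3/2)^λ − 2·(i−j+1/2)^λ + (i−j−1/2)^λ ) ]; in particular the right fractional integral contributes nothing to these entries. -/

import Mathlib

open MeasureTheory intervalIntegral Real

/-- Left fractional integral operator of order `lam` on `[0,1]`: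
`(I_L^λ f)(x) = (1/Γ(λ)) ∫_0^x (x−s)^{λ−1} f(s) ds`. -/
noncomputable def leftFracInt (lam : ℝ) (f : ℝ → ℝ) (x : ℝ) : ℝ :=
  (1 / Real.Gamma lam) * ∫ s in (0:ℝ)..x, (x - s) ^ (lam - 1) * f s

/-- Right fractional integral operator of order `lam` on `[0,1]`:
`(I_R^λ f)(x) = (1/Γ(λ)) ∫_x^1 (s−x)^{λ−1} f(s) ds`. -/
noncomputable def rightFracInt (lam : ℝ) (f : ℝ → ℝ) (x : ℝ) : ℝ :=
  (1 / Real.Gamma lam) * ∫ s in x..(1:ℝ), (s - x) ^ (lam - 1) * f s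

/-- The a.e. derivative `Dφ_j` of the hat function `φ_j` on a uniform grid with
spacing `h`: it equals `1/h` on `(x_{j-1}, x_j)`, `−1/h` on `(x_j, x_{j+1})`,
and `0` elsewhere, where `x_k = k·h`. -/
noncomputable def hatDeriv (h : ℝ) (j : ℕ) (s : ℝ) : ℝ :=
  if ((j : ℝ) - 1) * h < s ∧ s < (j : ℝ) * h then 1 / h
  else if (j : ℝ) * h < s ∧ s < ((j : ℝ) + 1) * h then -1 / h
  else 0

/-- The stiffness matrix entry
`z_{i,j} = b·[(γ I_L^λ + (1−γ) I_R^λ)(Dφ_j)(x_{i−1/2}) − (γ I_L^λ + (1−γ) I_R^λ)(Dφ_j)(x_{i+1/2})]`,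
where `x_{i±1/2} = (i ± 1/2)·h` are the midpoints of the grid cells. -/
noncomputable def stiff (lam gam b h : ℝ) (i j : ℕ) : ℝ :=
  b * ((gam * leftFracInt lam (hatDeriv h j) (((i : ℝ) - 1 / 2) * h)
          + (1 - gam) * rightFracInt lam (hatDeriv h j) (((i : ℝ) - 1 / 2) * h))
        - (gam * leftFracInt lam (hatDeriv h j) (((i : ℝ) + 1 / 2) * h)
          + (1 - gam) * rightFracInt lam (hatDeriv h j) (((i : ℝ) + 1 / 2) * h)))

/-! For `x ≥ x_{j+1}` the support `[x_{j-1}, x_{j+1}]` of `Dφ_j` lies to the left of `x`, so the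
right fractional integral of `Dφ_j` vanishes at `x`, while the left one is `1/h` times the integral
of the kernel `(x - s)^{λ-1}/Γ(λ)` over `[x_{j-1}, x_j]` minus that over `[x_j, x_{j+1}]`. Both are
explicit, and by homogeneity of `t ↦ t^λ`, at `x = (j + t) h` the result is
`h^{λ-1}/Γ(λ+1)` times the second difference `(t+1)^λ - 2 t^λ + (t-1)^λ`. The entry `z_{i,j}` is
`b γ` times the difference of these values at `t = i - j ∓ 1/2`. -/

open Set

lemma intervalIntegrable_sub_rpow {lam : ℝ} (hlam : 0 < lam) (x a b : ℝ) :
    IntervalIntegrable (fun s => (x - s) ^ (lam - 1)) volume a b := by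
  simpa using (intervalIntegrable_rpow' (a := x - a) (b := x - b)
    (by linarith : (-1:ℝ) < lam - 1)).comp_sub_left x

lemma integral_sub_rpow {lam : ℝ} (hlam : 0 < lam) (x a b : ℝ) :
    ∫ s in a..b, (x - s) ^ (lam - 1) = ((x - a) ^ lam - (x - b) ^ lam) / lam := by
  rw [integral_comp_sub_left (fun u => u ^ (lam - 1)) x,
    integral_rpow (Or.inl (by linarith : (-1:ℝ) < lam - 1))]
  norm_num

section hatDeriv

variable {h : ℝ} {j : ℕ}

lemma hatDeriv_eq_zero_of_le (hh : 0 < h) {s : ℝ} (hs : s ≤ ((j:ℝ) - 1) * h) :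
    hatDeriv h j s = 0 := by
  have : ((j:ℝ) - 1) * h < j * h := by nlinarith
  unfold hatDeriv
  rw [if_neg (by intro hc; linarith [hc.1]), if_neg (by intro hc; linarith [hc.1])]

lemma hatDeriv_eq_zero_of_ge (hh : 0 < h) {s : ℝ} (hs : ((j:ℝ) + 1) * h ≤ s) :
    hatDeriv h j s = 0 := by
  have : (j:ℝ) * h < (j + 1) * h := by nlinarith
  unfold hatDeriv
  rw [if_neg (by intro hc; linarith [hc.2]), if_neg (by intro hc; linarith [hc.2])]

lemma hatDeriv_eq_of_mem_Ioo_left {s : ℝ} (hs : s ∈ Ioo (((j:ℝ) - 1) * h) (j * h)) :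
    hatDeriv h j s = 1 / h := by
  rw [hatDeriv, if_pos (mem_Ioo.mp hs)]

lemma hatDeriv_eq_of_mem_Ioo_right {s : ℝ} (hs : s ∈ Ioo ((j:ℝ) * h) ((j + 1) * h)) :
    hatDeriv h j s = -1 / h := by
  rw [hatDeriv, if_neg (by intro hc; linarith [hc.2, hs.1]), if_pos (mem_Ioo.mp hs)]

end hatDeriv

lemma rightFracInt_hatDeriv_eq_zero (lam : ℝ) {h : ℝ} (hh : 0 < h) (j : ℕ) {x : ℝ}
    (hx : ((j:ℝ) + 1) * h ≤ x) (hx1 : x ≤ 1) :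
    rightFracInt lam (hatDeriv h j) x = 0 := by
  have : ∫ s in x..1, (s - x) ^ (lam - 1) * hatDeriv h j s = ∫ _ in x..1, (0:ℝ) :=
    integral_congr fun s hs => by
      rw [uIcc_of_le hx1] at hs
      rw [hatDeriv_eq_zero_of_ge hh (hx.trans hs.1), mul_zero]
  simp [rightFracInt, this]

lemma integral_mul_hatDeriv {lam h : ℝ} (hlam : 0 < lam) (hh : 0 < h) {j : ℕ} (hj : 1 ≤ j)
    {x : ℝ} (hx : ((j:ℝ) + 1) * h ≤ x) :
    ∫ s in (0:ℝ)..x, (x - s) ^ (lam - 1) * hatDeriv h j s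
      = ((x - (j - 1) * h) ^ lam - 2 * (x - j * h) ^ lam + (x - (j + 1) * h) ^ lam)
        / (lam * h) := by
  set F := fun s => (x - s) ^ (lam - 1) * hatDeriv h j s
  set a := ((j:ℝ) - 1) * h
  set c := (j:ℝ) * h
  set d := ((j:ℝ) + 1) * h
  have h0a : 0 ≤ a := mul_nonneg (by simpa using hj) hh.le
  have hac : a ≤ c := by nlinarith
  have hcd : c ≤ d := by nlinarith
  have eq₁ : EqOn F (fun _ => 0) (Ioo 0 a) := fun s hs => by
    simp only [F, hatDeriv_eq_zero_of_le hh hs.2.le, mul_zero]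
  have eq₂ : EqOn F (fun s => (x - s) ^ (lam - 1) * (1 / h)) (Ioo a c) := fun s hs => by
    simp only [F, hatDeriv_eq_of_mem_Ioo_left hs]
  have eq₃ : EqOn F (fun s => (x - s) ^ (lam - 1) * (-1 / h)) (Ioo c d) := fun s hs => by
    simp only [F, hatDeriv_eq_of_mem_Ioo_right hs]
  have eq₄ : EqOn F (fun _ => 0) (Ioo d x) := fun s hs => by
    simp only [F, hatDeriv_eq_zero_of_ge hh hs.1.le, mul_zero]
  have int₁ : IntervalIntegrable F volume 0 a :=
    intervalIntegrable_const.congr_uIoo (uIoo_of_le h0a ▸ eq₁.symm)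
  have int₂ : IntervalIntegrable F volume a c :=
    ((intervalIntegrable_sub_rpow hlam x a c).mul_const _).congr_uIoo
      (uIoo_of_le hac ▸ eq₂.symm)
  have int₃ : IntervalIntegrable F volume c d :=
    ((intervalIntegrable_sub_rpow hlam x c d).mul_const _).congr_uIoo
      (uIoo_of_le hcd ▸ eq₃.symm)
  have int₄ : IntervalIntegrable F volume d x :=
    intervalIntegrable_const.congr_uIoo (uIoo_of_le hx ▸ eq₄.symm)
  rw [← integral_add_adjacent_intervals (int₁.trans (int₂.trans int₃)) int₄,
    ← integral_add_adjacent_intervals int₁ (int₂.trans int₃),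
    ← integral_add_adjacent_intervals int₂ int₃,
    integral_congr_Ioo_of_le h0a eq₁, integral_congr_Ioo_of_le hac eq₂,
    integral_congr_Ioo_of_le hcd eq₃, integral_congr_Ioo_of_le hx eq₄,
    intervalIntegral.integral_zero, intervalIntegral.integral_zero,
    intervalIntegral.integral_mul_const,
    intervalIntegral.integral_mul_const, integral_sub_rpow hlam, integral_sub_rpow hlam]
  field_simp
  ring

lemma leftFracInt_hatDeriv {lam h : ℝ} (hlam : 0 < lam) (hh : 0 < h) {j : ℕ} (hj : 1 ≤ j)
    {t : ℝ} (ht : 1 ≤ t) :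
    leftFracInt lam (hatDeriv h j) ((j + t) * h)
      = h ^ (lam - 1) / Gamma (lam + 1) * ((t + 1) ^ lam - 2 * t ^ lam + (t - 1) ^ lam) := by
  rw [leftFracInt, integral_mul_hatDeriv hlam hh hj (by nlinarith),
    show ((j:ℝ) + t) * h - (j - 1) * h = (t + 1) * h by ring,
    show ((j:ℝ) + t) * h - j * h = t * h by ring,
    show ((j:ℝ) + t) * h - (j + 1) * h = (t - 1) * h by ring,
    mul_rpow (by linarith) hh.le, mul_rpow (by linarith) hh.le, mul_rpow (by linarith) hh.le,
    Gamma_add_one hlam.ne', rpow_sub_one hh.ne']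
  field_simp

theorem stiffness_lower_triangular_general
    (lam gam b : ℝ) (hlam0 : 0 < lam)
    (I : ℕ) (h : ℝ) (hh : h = 1 / (I : ℝ))
    (i j : ℕ) (hi2 : i ≤ I - 1) (hj1 : 1 ≤ j) (hj2 : j ≤ i - 2) :
    stiff lam gam b h i j
      = (b * gam * h ^ (lam - 1) / Real.Gamma (lam + 1))
        * ((((i : ℝ) - (j : ℝ) + 1 / 2) ^ lam
              - 2 * ((i : ℝ) - (j : ℝ) - 1 / 2) ^ lam
              + ((i : ℝ) - (j : ℝ) - 3 / 2) ^ lam)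
          - (((i : ℝ) - (j : ℝ) + 3 / 2) ^ lam
              - 2 * ((i : ℝ) - (j : ℝ) + 1 / 2) ^ lam
              + ((i : ℝ) - (j : ℝ) - 1 / 2) ^ lam)) := by
  have hI : (0:ℝ) < I := by exact_mod_cast (by omega : 0 < I)
  have hh0 : 0 < h := hh ▸ by positivity
  have hji : (j:ℝ) + 2 ≤ i := by exact_mod_cast (by omega : j + 2 ≤ i)
  have hiI : (i:ℝ) + 1 ≤ I := by exact_mod_cast (by omega : i + 1 ≤ I)
  have below_one : ∀ t : ℝ, t < I → t * h ≤ 1 := fun t ht => by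
    rw [hh, mul_one_div, div_le_one hI]; exact ht.le
  rw [stiff, show ((i:ℝ) - 1 / 2) * h = (j + (i - j - 1 / 2)) * h by ring,
    show ((i:ℝ) + 1 / 2) * h = (j + (i - j + 1 / 2)) * h by ring,
    rightFracInt_hatDeriv_eq_zero lam hh0 j (by nlinarith) (below_one _ (by linarith)),
    rightFracInt_hatDeriv_eq_zero lam hh0 j (by nlinarith) (below_one _ (by linarith)),
    leftFracInt_hatDeriv hlam0 hh0 hj1 (by linarith),
    leftFracInt_hatDeriv hlam0 hh0 hj1 (by linarith)]
  -- `ring_nf` also normalises the bases of the powers, e.g. `i - j - 1/2 + 1` to `i - j + 1/2`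
  ring_nf

/-- Strictly lower-triangular entries of the stiffness matrix; in particular
the right fractional integral contributes nothing to these entries. -/
theorem stiffness_lower_triangular
    (lam gam b : ℝ) (hlam0 : 0 < lam) (hlam1 : lam < 1)
    (hgam : gam ∈ Set.Icc (0:ℝ) 1) (hb : 0 < b)
    (I : ℕ) (hI : 2 ≤ I) (h : ℝ) (hh : h = 1 / (I : ℝ))
    (i j : ℕ) (hi1 : 3 ≤ i) (hi2 : i ≤ I - 1) (hj1 : 1 ≤ j) (hj2 : j ≤ i - 2) :
    stiff lam gam b h i j
      = (b * gam * h ^ (lam - 1) / Real.Gamma (lam + 1))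
        * ((((i : ℝ) - (j : ℝ) + 1 / 2) ^ lam
              - 2 * ((i : ℝ) - (j : ℝ) - 1 / 2) ^ lam
              + ((i : ℝ) - (j : ℝ) - 3 / 2) ^ lam)
          - (((i : ℝ) - (j : ℝ) + 3 / 2) ^ lam
              - 2 * ((i : ℝ) - (j : ℝ) + 1 / 2) ^ lam
              + ((i : ℝ) - (j : ℝ) - 1 / 2) ^ lam)) :=
  stiffness_lower_triangular_general lam gam b hlam0 I h hh i j hi2 hj1 hj2
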